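/- For natural numbers t, l, m, the number of lattice paths from (0,0) to (l,m) in the quiver with arrows (i,j)→(i,j+1), (i,j)→(i+1,j) for all (i,j), and diagonal arrows (i,j)→(i+1,j+1) only when i+j is even, having total length t, equals C(2t-l-m, t-m) · C(⌊(l+m)/2⌋, l+m-t). -/
import Mathlib


/-- Steps in the quiver: vertical `(i,j) → (i,j+1)`, horizontal `(i,j) → (i+1,j)`,
and diagonal `(i,j) → (i+1,j+1)`. -/
inductive Step : Type
  | H | V | D
deriving DecidableEq

/-- Move a point by one step. -/
def move : ℕ × ℕ → Step → ℕ × ℕ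
  | p, .H => (p.1 + 1, p.2)
  | p, .V => (p.1, p.2 + 1)
  | p, .D => (p.1 + 1, p.2 + 1)

/-- A list of steps is valid from a point `p` if every diagonal step starts at a
point `(i,j)` with `i + j` even. -/
def ValidFrom : ℕ × ℕ → List Step → Prop
  | _, [] => True
  | p, s :: rest => (s = Step.D → (p.1 + p.2) % 2 = 0) ∧ ValidFrom (move p s) rest

/-- Endpoint of a path starting at `p`. -/
def endpt (p : ℕ × ℕ) (L : List Step) : ℕ × ℕ := L.foldl move p

/-- `Q t l m` = C(2t-l-m, t-m) * C(⌊(l+m)/2⌋, l+m-t), with the convention that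
binomial coefficients with negative (out-of-range) arguments are zero; the guard
handles the cases where natural subtraction would otherwise misbehave. -/
def Q (t l m : ℕ) : ℕ :=
  if t < m ∨ l + m < t then 0
  else Nat.choose (2 * t - l - m) (t - m) * Nat.choose ((l + m) / 2) (l + m - t)

instance : Fintype Step :=
  ⟨{Step.H, Step.V, Step.D}, by intro x; cases x <;> simp⟩

def pathsF : ℕ → ℕ × ℕ → ℕ × ℕ → Finset (List Step)
  | 0, p, q => if p = q then {[]} else ∅
  | t+1, p, q =>
      Finset.univ.biUnion fun s =>
        if (s = Step.D → (p.1 + p.2) % 2 = 0) then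
          (pathsF t (move p s) q).image (s :: ·)
        else ∅

lemma endpt_cons (p : ℕ × ℕ) (s : Step) (L : List Step) :
    endpt p (s :: L) = endpt (move p s) L := rfl

lemma le_endpt (L : List Step) (p : ℕ × ℕ) :
    p.1 ≤ (endpt p L).1 ∧ p.2 ≤ (endpt p L).2 := by
  induction L generalizing p with
  | nil => exact ⟨le_rfl, le_rfl⟩
  | cons s L ih =>
    rw [endpt_cons]
    refine ⟨le_trans ?_ (ih (move p s)).1, le_trans ?_ (ih (move p s)).2⟩ <;>
      cases s <;> simp [move]

lemma mem_pathsF : ∀ (t : ℕ) (p q : ℕ × ℕ) (L : List Step),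
    L ∈ pathsF t p q ↔ L.length = t ∧ ValidFrom p L ∧ endpt p L = q := by
  intro t
  induction t with
  | zero =>
    intro p q L
    cases L with
    | nil => simp [pathsF, ValidFrom, endpt]; split_ifs with h <;> simp [h]
    | cons s L =>
      simp only [pathsF]
      split_ifs <;> simp [ValidFrom]
  | succ t ih =>
    intro p q L
    cases L with
    | nil =>
      simp only [pathsF, Finset.mem_biUnion, Finset.mem_univ, true_and]
      constructor
      · rintro ⟨s', hs'⟩
        split_ifs at hs' with hc <;> simp at hs'
      · rintro ⟨hlen, -, -⟩; simp at hlen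
    | cons s L =>
      simp only [pathsF, Finset.mem_biUnion, Finset.mem_univ, true_and]
      constructor
      · rintro ⟨s', hs'⟩
        split_ifs at hs' with hc
        · simp only [Finset.mem_image] at hs'
          obtain ⟨M, hM, hMe⟩ := hs'
          obtain ⟨rfl, rfl⟩ : s' = s ∧ M = L := by
            constructor <;> [exact (List.cons.injEq .. ▸ hMe).1; exact (List.cons.injEq .. ▸ hMe).2]
          rw [ih] at hM
          exact ⟨by simp [hM.1], ⟨hc, hM.2.1⟩, hM.2.2⟩
        · simp at hs'
      · rintro ⟨hlen, ⟨hc, hval⟩, hend⟩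
        refine ⟨s, ?_⟩
        rw [if_pos hc]
        simp only [Finset.mem_image]
        exact ⟨L, (ih _ _ _).2 ⟨by simpa using hlen, hval, hend⟩, rfl⟩

lemma pathsF_empty (t : ℕ) (p q : ℕ × ℕ) (h : q.1 < p.1 ∨ q.2 < p.2) :
    pathsF t p q = ∅ := by
  ext L
  simp only [Finset.notMem_empty, iff_false, mem_pathsF]
  rintro ⟨-, -, hend⟩
  rcases h with h | h
  · exact absurd (hend ▸ (le_endpt L p).1) (by omega)
  · exact absurd (hend ▸ (le_endpt L p).2) (by omega)

def R (r t l m : ℕ) : ℕ :=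
  if t < m ∨ t < l ∨ l + m < t then 0
  else (2 * t - l - m).choose (t - m) *
    (if r = 0 then ((l + m - t) + (2 * t - l - m) / 2).choose (l + m - t)
     else ((l + m - t) + (2 * t - l - m + 1) / 2 - 1).choose (l + m - t))

lemma R_guard (r t l m : ℕ) (h : t < m ∨ t < l ∨ l + m < t) : R r t l m = 0 := by
  simp only [R, if_pos h]

lemma R_zero (r l m : ℕ) : R r 0 l m = if l = 0 ∧ m = 0 then 1 else 0 := by
  by_cases h : l = 0 ∧ m = 0
  · obtain ⟨rfl, rfl⟩ := h
    simp [R]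
  · rw [if_neg h, R_guard _ _ _ _ (by omega)]

lemma R_eval (r t l m h v d : ℕ) (h1 : l = h + d) (h2 : m = v + d) (h3 : t = h + v + d) :
    R r t l m = (h + v).choose h *
      (if r = 0 then (d + (h + v) / 2).choose d else (d + (h + v + 1) / 2 - 1).choose d) := by
  subst h1 h2 h3
  rw [R, if_neg (by omega)]
  have a1 : 2 * (h + v + d) - (h + d) - (v + d) = h + v := by omega
  have a2 : h + v + d - (v + d) = h := by omega
  have a3 : h + d + (v + d) - (h + v + d) = d := by omega
  rw [a1, a2, a3]

lemma pascalA (h v : ℕ) :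
    (h + 1 + (v + 1)).choose (h + 1) =
      (h + (v + 1)).choose h + (h + (v + 1)).choose (h + 1) := by
  have e : h + 1 + (v + 1) = (h + (v + 1)) + 1 := by omega
  rw [e, Nat.choose_succ_succ]

lemma chooseB' (k d : ℕ) :
    (d + k).choose d = (d + k - 1).choose d +
      (if 1 ≤ d then (d - 1 + k).choose (d - 1) else 0) := by
  rcases Nat.eq_zero_or_pos d with rfl | hd
  · simp
  rw [if_pos (show 1 ≤ d from hd)]
  obtain ⟨d', rfl⟩ : ∃ d', d = d' + 1 := ⟨d - 1, by omega⟩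
  rcases Nat.eq_zero_or_pos k with rfl | hk
  · simp [Nat.choose_self, Nat.choose_succ_self]
  obtain ⟨k', rfl⟩ : ∃ k', k = k' + 1 := ⟨k - 1, by omega⟩
  have e2 : d' + 1 + (k' + 1) - 1 = d' + 1 + k' := by omega
  have e3 : d' + 1 - 1 + (k' + 1) = d' + 1 + k' := by omega
  have e4 : d' + 1 - 1 = d' := by omega
  rw [e2, e3, e4]
  have e1 : d' + 1 + (k' + 1) = (d' + 1 + k') + 1 := by omega
  rw [e1, Nat.choose_succ_succ]
  simp only [Nat.succ_eq_add_one]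
  omega

lemma R_succ (r t l m : ℕ) :
    R r (t + 1) l m =
      (if 1 ≤ l then R (1 - r) t (l - 1) m else 0) +
      (if 1 ≤ m then R (1 - r) t l (m - 1) else 0) +
      (if r = 0 ∧ 1 ≤ l ∧ 1 ≤ m then R r t (l - 1) (m - 1) else 0) := by
  by_cases hg : t + 1 < m ∨ t + 1 < l ∨ l + m < t + 1
  · rw [R_guard _ _ _ _ hg]
    have e1 : (if 1 ≤ l then R (1 - r) t (l - 1) m else 0) = 0 := by
      split_ifs with h
      · exact R_guard _ _ _ _ (by omega)
      · rfl
    have e2 : (if 1 ≤ m then R (1 - r) t l (m - 1) else 0) = 0 := by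
      split_ifs with h
      · exact R_guard _ _ _ _ (by omega)
      · rfl
    have e3 : (if r = 0 ∧ 1 ≤ l ∧ 1 ≤ m then R r t (l - 1) (m - 1) else 0) = 0 := by
      split_ifs with h
      · exact R_guard _ _ _ _ (by omega)
      · rfl
    rw [e1, e2, e3]
  · push_neg at hg
    obtain ⟨hm, hl, hlm⟩ := hg
    obtain ⟨h, v, d, rfl, rfl, ht⟩ : ∃ h v d, l = h + d ∧ m = v + d ∧ t + 1 = h + v + d :=
      ⟨t + 1 - m, t + 1 - l, l + m - (t + 1), by omega, by omega, by omega⟩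
    rw [R_eval r (t+1) _ _ h v d rfl rfl ht]
    have T1 : (if 1 ≤ h + d then R (1 - r) t (h + d - 1) (v + d) else 0) =
        (if 1 ≤ h then (h - 1 + v).choose (h - 1) *
          (if 1 - r = 0 then (d + (h - 1 + v) / 2).choose d
           else (d + (h - 1 + v + 1) / 2 - 1).choose d) else 0) := by
      by_cases hh : 1 ≤ h
      · rw [if_pos (by omega : 1 ≤ h + d), if_pos hh,
          R_eval (1 - r) t (h + d - 1) (v + d) (h - 1) v d (by omega) rfl (by omega)]
      · rw [if_neg hh]
        by_cases hd : 1 ≤ d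
        · rw [if_pos (by omega : 1 ≤ h + d), R_guard _ _ _ _ (by omega)]
        · rw [if_neg (by omega : ¬ 1 ≤ h + d)]
    have T2 : (if 1 ≤ v + d then R (1 - r) t (h + d) (v + d - 1) else 0) =
        (if 1 ≤ v then (h + (v - 1)).choose h *
          (if 1 - r = 0 then (d + (h + (v - 1)) / 2).choose d
           else (d + (h + (v - 1) + 1) / 2 - 1).choose d) else 0) := by
      by_cases hv : 1 ≤ v
      · rw [if_pos (by omega : 1 ≤ v + d), if_pos hv,
          R_eval (1 - r) t (h + d) (v + d - 1) h (v - 1) d rfl (by omega) (by omega)]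
      · rw [if_neg hv]
        by_cases hd : 1 ≤ d
        · rw [if_pos (by omega : 1 ≤ v + d), R_guard _ _ _ _ (by omega)]
        · rw [if_neg (by omega : ¬ 1 ≤ v + d)]
    have T3 : (if r = 0 ∧ 1 ≤ h + d ∧ 1 ≤ v + d then R r t (h + d - 1) (v + d - 1) else 0) =
        (if r = 0 ∧ 1 ≤ d then (h + v).choose h *
          (if r = 0 then (d - 1 + (h + v) / 2).choose (d - 1)
           else (d - 1 + (h + v + 1) / 2 - 1).choose (d - 1)) else 0) := by
      by_cases hcond : r = 0 ∧ 1 ≤ d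
      · obtain ⟨hr, hd⟩ := hcond
        rw [if_pos ⟨hr, by omega, by omega⟩, if_pos ⟨hr, hd⟩,
          R_eval r t (h + d - 1) (v + d - 1) h v (d - 1) (by omega) (by omega) (by omega)]
      · by_cases hc : r = 0 ∧ 1 ≤ h + d ∧ 1 ≤ v + d
        · obtain ⟨hr, hc1, hc2⟩ := hc
          have hd : ¬ 1 ≤ d := fun hd => hcond ⟨hr, hd⟩
          rw [if_pos ⟨hr, hc1, hc2⟩, if_neg hcond, R_guard _ _ _ _ (by omega)]
        · rw [if_neg hc, if_neg hcond]
    rw [T1, T2, T3]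
    clear T1 T2 T3 hm hl hlm
    by_cases hr : r = 0
    · subst hr
      simp only [Nat.sub_zero, eq_self_iff_true, true_and, if_true, one_ne_zero, if_false]
      obtain _ | h := h <;> obtain _ | v := v
      · -- h = 0, v = 0, d ≥ 1
        have hd : 1 ≤ d := by omega
        simp only [if_neg (show ¬(1:ℕ) ≤ 0 by omega), if_pos hd]
        simp [Nat.choose_self]
      · -- h = 0, v ≥ 1
        simp only [if_neg (show ¬(1:ℕ) ≤ 0 by omega),
          if_pos (show (1:ℕ) ≤ v + 1 by omega), Nat.add_sub_cancel, Nat.zero_add,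
          Nat.choose_zero_right, one_mul]
        exact chooseB' ((v + 1) / 2) d
      · -- h ≥ 1, v = 0
        simp only [if_neg (show ¬(1:ℕ) ≤ 0 by omega),
          if_pos (show (1:ℕ) ≤ h + 1 by omega), Nat.add_sub_cancel, Nat.add_zero,
          Nat.choose_self, one_mul]
        exact chooseB' ((h + 1) / 2) d
      · -- h, v ≥ 1
        simp only [if_pos (show (1:ℕ) ≤ h + 1 by omega),
          if_pos (show (1:ℕ) ≤ v + 1 by omega), Nat.add_sub_cancel]
        rw [show h + (v + 1) = h + 1 + v from by omega]
        have e1 : d + (h + 1 + v + 1) / 2 - 1 = d + (h + 1 + (v + 1)) / 2 - 1 := by omega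
        rw [e1]
        have hp := pascalA h v
        rw [show h + (v + 1) = h + 1 + v from by omega] at hp
        rw [hp, chooseB' ((h + 1 + (v + 1)) / 2) d]
        by_cases hd : 1 ≤ d
        · rw [if_pos hd, if_pos hd]; ring
        · rw [if_neg hd, if_neg hd]; ring
    · have h1r : 1 - r = 0 := by omega
      rw [if_neg hr, if_neg (show ¬(r = 0 ∧ 1 ≤ d) from fun hx => hr hx.1)]
      simp only [h1r, eq_self_iff_true, if_true]
      obtain _ | h := h <;> obtain _ | v := v
      · -- h = v = 0, d ≥ 1
        have hd : 1 ≤ d := by omega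
        simp only [if_neg (show ¬(1:ℕ) ≤ 0 by omega)]
        have e : d + (0 + 0 + 1) / 2 - 1 = d - 1 := by omega
        rw [e, Nat.choose_eq_zero_of_lt (show d - 1 < d by omega)]
        simp
      · -- h = 0, v ≥ 1
        simp only [if_neg (show ¬(1:ℕ) ≤ 0 by omega),
          if_pos (show (1:ℕ) ≤ v + 1 by omega), Nat.add_sub_cancel, Nat.zero_add,
          Nat.choose_zero_right, one_mul]
        have e : d + (v + 1 + 1) / 2 - 1 = d + v / 2 := by omega
        rw [e]
        simp
      · -- h ≥ 1, v = 0
        simp only [if_neg (show ¬(1:ℕ) ≤ 0 by omega),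
          if_pos (show (1:ℕ) ≤ h + 1 by omega), Nat.add_sub_cancel, Nat.add_zero,
          Nat.choose_self, one_mul]
        have e : d + (h + 1 + 1) / 2 - 1 = d + h / 2 := by omega
        rw [e]
      · -- h, v ≥ 1
        simp only [if_pos (show (1:ℕ) ≤ h + 1 by omega),
          if_pos (show (1:ℕ) ≤ v + 1 by omega), Nat.add_sub_cancel]
        rw [show h + (v + 1) = h + 1 + v from by omega]
        have e1 : d + (h + 1 + (v + 1) + 1) / 2 - 1 = d + (h + 1 + v) / 2 := by omega
        rw [e1]
        have hp := pascalA h v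
        rw [show h + (v + 1) = h + 1 + v from by omega] at hp
        rw [hp]
        ring

lemma card_pathsF : ∀ (t : ℕ) (p : ℕ × ℕ) (a b : ℕ),
    (pathsF t p (p.1 + a, p.2 + b)).card = R ((p.1 + p.2) % 2) t a b := by
  intro t
  induction t with
  | zero =>
    intro p a b
    rw [R_zero]
    by_cases h : a = 0 ∧ b = 0
    · obtain ⟨rfl, rfl⟩ := h
      simp [pathsF]
    · rw [if_neg h]
      have hne : ¬ p = (p.1 + a, p.2 + b) := by
        intro he
        rw [Prod.ext_iff] at he
        exact h ⟨by omega, by omega⟩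
      simp [pathsF, hne]
  | succ t ih =>
    intro p a b
    have hdisj : ∀ x ∈ (Finset.univ : Finset Step), ∀ y ∈ Finset.univ, x ≠ y →
        Disjoint
          (if (x = Step.D → (p.1 + p.2) % 2 = 0) then
            (pathsF t (move p x) (p.1 + a, p.2 + b)).image (x :: ·) else ∅)
          (if (y = Step.D → (p.1 + p.2) % 2 = 0) then
            (pathsF t (move p y) (p.1 + a, p.2 + b)).image (y :: ·) else ∅) := by
      intro x _ y _ hxy
      rw [Finset.disjoint_left]
      intro L hLx hLy
      have hx : ∃ M, L = x :: M := by
        split_ifs at hLx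
        · simp only [Finset.mem_image] at hLx
          obtain ⟨M, _, rfl⟩ := hLx
          exact ⟨M, rfl⟩
        · simp at hLx
      have hy : ∃ M, L = y :: M := by
        split_ifs at hLy
        · simp only [Finset.mem_image] at hLy
          obtain ⟨M, _, rfl⟩ := hLy
          exact ⟨M, rfl⟩
        · simp at hLy
      obtain ⟨M, rfl⟩ := hx
      obtain ⟨M', hM'⟩ := hy
      exact hxy (by injection hM')
    rw [show pathsF (t+1) p (p.1 + a, p.2 + b) =
        Finset.univ.biUnion (fun s => if (s = Step.D → (p.1 + p.2) % 2 = 0) then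
          (pathsF t (move p s) (p.1 + a, p.2 + b)).image (s :: ·) else ∅) from rfl,
      Finset.card_biUnion hdisj,
      show (Finset.univ : Finset Step) = {Step.H, Step.V, Step.D} from rfl,
      Finset.sum_insert (by decide), Finset.sum_insert (by decide), Finset.sum_singleton]
    have hH : (if (Step.H = Step.D → (p.1 + p.2) % 2 = 0) then
        (pathsF t (move p Step.H) (p.1 + a, p.2 + b)).image (Step.H :: ·) else ∅).card =
        (if 1 ≤ a then R (1 - (p.1 + p.2) % 2) t (a - 1) b else 0) := by
      rw [if_pos (fun hc => absurd hc (by decide))]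
      rw [Finset.card_image_of_injective _ (List.cons_injective)]
      by_cases ha : 1 ≤ a
      · rw [if_pos ha]
        have he : (p.1 + a, p.2 + b) = ((move p Step.H).1 + (a - 1), (move p Step.H).2 + b) := by
          simp only [move, Prod.mk.injEq, and_true, true_and]
          omega
        rw [he, ih]
        congr 1
        simp only [move]
        omega
      · rw [if_neg ha, pathsF_empty t _ _ (Or.inl (by simp [move]; omega))]
        simp
    have hV : (if (Step.V = Step.D → (p.1 + p.2) % 2 = 0) then
        (pathsF t (move p Step.V) (p.1 + a, p.2 + b)).image (Step.V :: ·) else ∅).card =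
        (if 1 ≤ b then R (1 - (p.1 + p.2) % 2) t a (b - 1) else 0) := by
      rw [if_pos (fun hc => absurd hc (by decide))]
      rw [Finset.card_image_of_injective _ (List.cons_injective)]
      by_cases hb : 1 ≤ b
      · rw [if_pos hb]
        have he : (p.1 + a, p.2 + b) = ((move p Step.V).1 + a, (move p Step.V).2 + (b - 1)) := by
          simp only [move, Prod.mk.injEq, and_true, true_and]
          omega
        rw [he, ih]
        congr 1
        simp only [move]
        omega
      · rw [if_neg hb, pathsF_empty t _ _ (Or.inr (by simp [move]; omega))]
        simp
    have hD : (if (Step.D = Step.D → (p.1 + p.2) % 2 = 0) then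
        (pathsF t (move p Step.D) (p.1 + a, p.2 + b)).image (Step.D :: ·) else ∅).card =
        (if (p.1 + p.2) % 2 = 0 ∧ 1 ≤ a ∧ 1 ≤ b then R ((p.1 + p.2) % 2) t (a - 1) (b - 1)
         else 0) := by
      by_cases hpar : (p.1 + p.2) % 2 = 0
      · rw [if_pos (fun _ => hpar)]
        rw [Finset.card_image_of_injective _ (List.cons_injective)]
        by_cases hab : 1 ≤ a ∧ 1 ≤ b
        · rw [if_pos ⟨hpar, hab⟩]
          have he : (p.1 + a, p.2 + b) =
              ((move p Step.D).1 + (a - 1), (move p Step.D).2 + (b - 1)) := by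
            simp only [move, Prod.mk.injEq]
            constructor <;> omega
          rw [he, ih]
          congr 1
          simp only [move]
          omega
        · rw [if_neg (fun hx => hab hx.2)]
          rcases (by omega : ¬ 1 ≤ a ∨ ¬ 1 ≤ b) with h | h
          · rw [pathsF_empty t _ _ (Or.inl (by simp [move]; omega))]
            simp
          · rw [pathsF_empty t _ _ (Or.inr (by simp [move]; omega))]
            simp
      · rw [if_neg (fun hc => hpar (hc rfl)), if_neg (fun hx => hpar hx.1)]
        simp
    rw [hH, hV, hD, R_succ]
    ring

lemma R_eq_Q (t l m : ℕ) : R 0 t l m = Q t l m := by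
  by_cases hg : t < m ∨ l + m < t
  · rw [R_guard _ _ _ _ (by tauto), Q, if_pos hg]
  · push_neg at hg
    rw [Q, if_neg (by omega)]
    by_cases hl : t < l
    · rw [R_guard _ _ _ _ (by tauto)]
      by_cases htm : t = m
      · rw [Nat.choose_eq_zero_of_lt (show (l + m) / 2 < l + m - t by omega), mul_zero]
      · rw [Nat.choose_eq_zero_of_lt (show 2 * t - l - m < t - m by omega), zero_mul]
    · rw [R, if_neg (by omega), if_pos rfl,
        show (l + m - t) + (2 * t - l - m) / 2 = (l + m) / 2 from by omega]

/-- The number of valid paths of length `t` from `(0,0)` to `(l,m)` equals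
`C(2t-l-m, t-m) * C(⌊(l+m)/2⌋, l+m-t)` (i.e. `Q t l m`). -/
theorem stmt_0 (t l m : ℕ) :
    Nat.card {L : List Step // L.length = t ∧ ValidFrom (0, 0) L ∧ endpt (0, 0) L = (l, m)}
      = Q t l m := by
  rw [Nat.card_congr (Equiv.subtypeEquivRight
    (fun L => (mem_pathsF t (0, 0) (l, m) L).symm)),
    Nat.card_eq_finsetCard,
    show ((l, m) : ℕ × ℕ) = (((0,0) : ℕ × ℕ).1 + l, ((0,0) : ℕ × ℕ).2 + m) from by simp,
    card_pathsF t (0, 0) l m]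
  rw [show ((((0,0) : ℕ × ℕ).1 + ((0,0) : ℕ × ℕ).2) % 2) = 0 from by simp]
  exact R_eq_Q t l m
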